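/- Let G be a d-regular graph on n vertices with normalized adjacency matrix AD^{-1} having eigenvalues 1 = λ_1 ≥ ... ≥ λ_n. If S ⊂ V is a stable (independent) set with |S|/n = −λ_n/(1 − λ_n) (i.e., S attains the Hoffman bound), then 𝟙_S is a linear combination of 𝟙 and an eigenvector of AD^{-1} with eigenvalue λ_n; consequently S fails to integrate the eigenspace of λ_n. -/

import Mathlib

/-!
Since `lam` is the least eigenvalue of the symmetric matrix `A/d`, the matrix `A/d - lam • 1` is
positive semidefinite. Put `α = |S|/n` and `φ = 𝟙_S - α • 𝟙`. Stability (`𝟙_Sᵀ A 𝟙_S = 0`) and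
regularity (`A 𝟙 = d 𝟙`) give `φᵀ (A/d - lam • 1) φ = -|S| (lam + α (1 - lam))`, which vanishes
exactly when `S` attains the Hoffman bound; a positive semidefinite form vanishes only on its
kernel, so `φ` is a `lam`-eigenvector. It sums to `0` over `V` and to `|S| (1 - α)` over `S`, and
the latter is nonzero because an edge forces `lam ≤ -1/d < 0`, hence `0 < α < 1`.
-/

open Finset Matrix SimpleGraph

namespace Matrix
variable {n : Type*} [Fintype n]

theorem sub_smul_one_mulVec [DecidableEq n] (M : Matrix n n ℝ) (lam : ℝ) (v : n → ℝ) :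
    (M - lam • 1) *ᵥ v = M *ᵥ v - lam • v := by
  rw [sub_mulVec, smul_mulVec, one_mulVec]

theorem dotProduct_mulVec_sub_smul_one {B : Matrix n n ℝ} (hB : B.IsSymm) {κ : ℝ}
    (h1 : B *ᵥ 1 = κ • 1) (x : n → ℝ) (c : ℝ) :
    (x - c • 1) ⬝ᵥ (B *ᵥ (x - c • 1)) =
      x ⬝ᵥ (B *ᵥ x) - 2 * c * κ * ∑ i, x i + c ^ 2 * κ * Fintype.card n := by
  have hx : (1 : n → ℝ) ⬝ᵥ (B *ᵥ x) = x ⬝ᵥ (B *ᵥ 1) := by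
    rw [dotProduct_mulVec, dotProduct_comm, ← vecMul_transpose, hB.eq]
  simp only [mulVec_sub, mulVec_smul, sub_dotProduct, dotProduct_sub, smul_dotProduct,
    dotProduct_smul, hx, h1, smul_eq_mul, dotProduct_one, Pi.sub_apply, Pi.smul_apply,
    Pi.one_apply, mul_one, sum_sub_distrib, sum_const, card_univ, nsmul_eq_mul]
  ring

theorem PosSemidef.apply_add_apply_le [DecidableEq n] {B : Matrix n n ℝ} (hB : B.PosSemidef)
    (i j : n) : B i j + B j i ≤ B i i + B j j := by
  have := hB.dotProduct_mulVec_nonneg (Pi.single i 1 - Pi.single j 1)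
  simp only [star_trivial, mulVec_sub, mulVec_single, MulOpposite.op_one, one_smul,
    dotProduct_sub, sub_dotProduct, single_dotProduct, col_apply, one_mul, sub_nonneg] at this
  linarith

theorem IsHermitian.posSemidef_sub_smul_one [DecidableEq n] {M : Matrix n n ℝ}
    (hM : M.IsHermitian) {lam : ℝ}
    (hmin : ∀ (μ : ℝ) (ψ : n → ℝ), ψ ≠ 0 → M *ᵥ ψ = μ • ψ → lam ≤ μ) :
    (M - lam • 1).PosSemidef := by
  have hB : (M - lam • 1).IsHermitian := hM.sub (isHermitian_one.smul (IsSelfAdjoint.all lam))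
  refine hB.posSemidef_iff_eigenvalues_nonneg.mpr fun i => ?_
  set v := ⇑(hB.eigenvectorBasis i)
  have hv : M *ᵥ v = (hB.eigenvalues i + lam) • v := by
    rw [add_smul, ← hB.mulVec_eigenvectorBasis i, sub_smul_one_mulVec, sub_add_cancel]
  have hne : v ≠ 0 := by simpa [v] using hB.eigenvectorBasis.orthonormal.ne_zero i
  simpa using hmin _ v hne hv

theorem mulVec_sub_smul_one_eq_smul_of_hoffman_equality [DecidableEq n] {M : Matrix n n ℝ}
    (hM1 : M *ᵥ 1 = 1) {lam : ℝ} (hB : (M - lam • 1).PosSemidef) {χ : n → ℝ}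
    (hχ : χ ⬝ᵥ (M *ᵥ χ) = 0) (hχχ : χ ⬝ᵥ χ = ∑ i, χ i) {α : ℝ}
    (hαn : α * Fintype.card n = ∑ i, χ i) (hα : α * (1 - lam) = -lam) :
    M *ᵥ (χ - α • 1) = lam • (χ - α • 1) := by
  have hB1 : (M - lam • 1) *ᵥ 1 = (1 - lam) • 1 := by
    rw [sub_smul_one_mulVec, hM1, sub_smul, one_smul]
  have hq := dotProduct_mulVec_sub_smul_one (isHermitian_iff_isSymm.mp hB.isHermitian) hB1 χ α
  rw [sub_smul_one_mulVec M lam χ, dotProduct_sub, dotProduct_smul, hχ, hχχ, ← hαn] at hq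
  have hzero : (χ - α • 1) ⬝ᵥ ((M - lam • 1) *ᵥ (χ - α • 1)) = 0 := by
    rw [hq, smul_eq_mul]; linear_combination -(α * Fintype.card n) * hα
  rw [← sub_eq_zero, ← sub_smul_one_mulVec]
  exact (hB.dotProduct_mulVec_zero_iff _).mp (by simpa using hzero)

end Matrix

namespace SimpleGraph
variable {V : Type*} (G : SimpleGraph V) [DecidableRel G.Adj]

theorem isHermitian_inv_smul_adjMatrix (d : ℕ) : ((d : ℝ)⁻¹ • G.adjMatrix ℝ).IsHermitian :=
  isHermitian_iff_isSymm.mpr (G.isSymm_adjMatrix.smul _)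

variable {G} [Fintype V]

theorem IsRegularOfDegree.inv_smul_adjMatrix_mulVec_one {d : ℕ} (hd : G.IsRegularOfDegree d)
    (hd0 : d ≠ 0) : ((d : ℝ)⁻¹ • G.adjMatrix ℝ) *ᵥ 1 = 1 := by
  ext v
  rw [smul_mulVec, Pi.smul_apply, ← Function.const_one, adjMatrix_mulVec_const_apply_of_regular hd]
  simp [hd0]

variable [DecidableEq V]

theorem dotProduct_adjMatrix_mulVec_indicator_eq_zero {S : Finset V}
    (hS : ∀ u ∈ S, ∀ v ∈ S, ¬ G.Adj u v) :
    (fun x => if x ∈ S then (1 : ℝ) else 0) ⬝ᵥ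
      (G.adjMatrix ℝ *ᵥ fun x => if x ∈ S then 1 else 0) = 0 := by
  rw [dotProduct_mulVec_adjMatrix]
  refine sum_eq_zero fun u _ => sum_eq_zero fun v _ => ?_
  by_cases hu : u ∈ S
  · by_cases hv : v ∈ S
    · simp [hS u hu v hv]
    · simp [hv]
  · simp [hu]

theorem le_neg_inv_of_posSemidef {d : ℕ} {lam : ℝ}
    (hB : ((d : ℝ)⁻¹ • G.adjMatrix ℝ - lam • 1).PosSemidef) {u v : V} (huv : G.Adj u v) :
    lam ≤ -(d : ℝ)⁻¹ := by
  have := hB.apply_add_apply_le u v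
  simp only [Matrix.sub_apply, Matrix.smul_apply, adjMatrix_apply, huv, huv.symm, G.irrefl,
    one_apply_eq, one_apply_ne huv.ne, one_apply_ne huv.ne.symm, if_true, if_false,
    smul_eq_mul] at this
  linarith

end SimpleGraph

/-- Hoffman-bound tightness. Let `G` be a `d`-regular graph, `lam` its
least normalized-adjacency eigenvalue, and `S` a stable set with
`|S|/n = −lam/(1 − lam)`. Then `𝟙_S` is a linear combination of `𝟙` and an
eigenvector of `A/d` with eigenvalue `lam`; consequently `S` fails to integrate the
`lam`-eigenspace (there is a `lam`-eigenvector orthogonal to `𝟙` whose sum over `S`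
is nonzero). -/
theorem stmt15 {V : Type*} [Fintype V] [DecidableEq V]
    (G : SimpleGraph V) [DecidableRel G.Adj]
    (d : ℕ) (hd : G.IsRegularOfDegree d) (hd0 : 0 < d) (lam : ℝ)
    (hmin : ∀ (μ : ℝ) (ψ : V → ℝ), ψ ≠ 0 →
      ((d : ℝ)⁻¹ • G.adjMatrix ℝ).mulVec ψ = μ • ψ → lam ≤ μ)
    (heig : ∃ ψ : V → ℝ, ψ ≠ 0 ∧
      ((d : ℝ)⁻¹ • G.adjMatrix ℝ).mulVec ψ = lam • ψ)
    (S : Finset V) (hstable : ∀ u ∈ S, ∀ v ∈ S, ¬ G.Adj u v)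
    (hhoff : (S.card : ℝ) / (Fintype.card V : ℝ) = -lam / (1 - lam)) :
    (∃ (c : ℝ) (φ : V → ℝ),
        ((d : ℝ)⁻¹ • G.adjMatrix ℝ).mulVec φ = lam • φ ∧
        ∀ x, (if x ∈ S then (1 : ℝ) else 0) = c + φ x) ∧
    ∃ φ : V → ℝ,
      ((d : ℝ)⁻¹ • G.adjMatrix ℝ).mulVec φ = lam • φ ∧
      (∑ v, φ v = 0) ∧ ∑ x ∈ S, φ x ≠ 0 := by
  obtain ⟨ψ, hψ, -⟩ := heig
  obtain ⟨v, -⟩ := Function.ne_iff.mp hψ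
  obtain ⟨w, hvw⟩ := (G.degree_pos_iff_exists_adj v).mp (hd v ▸ hd0)
  have hB := (G.isHermitian_inv_smul_adjMatrix d).posSemidef_sub_smul_one hmin
  have hlam : lam < 0 := (le_neg_inv_of_posSemidef hB hvw).trans_lt (by simpa using hd0)
  have hn : (0 : ℝ) < Fintype.card V := by exact_mod_cast Fintype.card_pos_iff.mpr ⟨v⟩
  set χ : V → ℝ := fun x => if x ∈ S then 1 else 0
  set α : ℝ := S.card / Fintype.card V
  have hsum : ∑ x, χ x = S.card := by simp [χ]
  have hαn : α * Fintype.card V = S.card := div_mul_cancel₀ _ hn.ne'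
  have hα : α * (1 - lam) = -lam := by
    rw [hhoff, div_mul_cancel₀ _ (by linarith : (1 - lam) ≠ 0)]
  have hφ := mulVec_sub_smul_one_eq_smul_of_hoffman_equality
    (hd.inv_smul_adjMatrix_mulVec_one hd0.ne') hB
    (by rw [smul_mulVec, dotProduct_smul,
      dotProduct_adjMatrix_mulVec_indicator_eq_zero hstable, smul_zero])
    (by simp [χ, dotProduct]) (hαn.trans hsum.symm) hα
  have hα01 : 0 < α ∧ α < 1 := by constructor <;> nlinarith
  refine ⟨⟨α, χ - α • 1, hφ, fun x => by simp [χ]⟩, χ - α • 1, hφ, ?_, ?_⟩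
  · simp [sum_sub_distrib, hsum, ← hαn, mul_comm]
  · have hS : ∀ x ∈ S, (χ - α • 1) x = 1 - α := fun x hx => by simp [χ, hx]
    rw [sum_congr rfl hS, sum_const, nsmul_eq_mul, ← hαn]
    exact (mul_pos (mul_pos hα01.1 hn) (sub_pos.2 hα01.2)).ne'
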